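/- arXiv:1809.08878 — 5 statements merged into one kernel-verified Lean document; each statement's English description precedes it below -/
import Mathlib

section
/- Let N ≥ 1 and let H_i > w_i > 0 for i = 1,…,N. Define the N×N matrix B by b_{ii} = H_i and b_{ij} = w_i for j ≠ i. Then the system of linear equations x B = 1 (where 1 is the all-ones row vector) has a unique solution x, given by x_i = 1 / ((H_i - w_i)(1 + Σ_{k=1}^N w_k/(H_k - w_k))). -/
open Finset

/-- The system x B = 1 for the inhibitory-network mean matrix B has the unique
solution x_i = 1/((H_i - w_i)(1 + Σ_k w_k/(H_k - w_k))). -/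
theorem unique_solution_xB_eq_one (N : ℕ) (hN : 1 ≤ N) (H w : Fin N → ℝ)
    (hw : ∀ i, 0 < w i) (hH : ∀ i, w i < H i)
    (B : Matrix (Fin N) (Fin N) ℝ)
    (hB : ∀ i j, B i j = if i = j then H i else w i)
    (x : Fin N → ℝ)
    (hx : ∀ i, x i = 1 / ((H i - w i) * (1 + ∑ k, w k / (H k - w k)))) :
    (∀ j, ∑ i, x i * B i j = 1) ∧
      ∀ y : Fin N → ℝ, (∀ j, ∑ i, y i * B i j = 1) → y = x := by
  have hd : ∀ i, 0 < H i - w i := fun i => sub_pos.mpr (hH i)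
  set T := ∑ k, w k / (H k - w k) with hT
  have hT0 : 0 ≤ T := Finset.sum_nonneg fun k _ => div_nonneg (hw k).le (hd k).le
  have hSpos : 0 < 1 + T := by linarith
  have key : ∀ (y : Fin N → ℝ) (j : Fin N),
      ∑ i, y i * B i j = (∑ i, y i * w i) + y j * (H j - w j) := by
    intro y j
    have h : ∀ i, y i * B i j = y i * w i + (if i = j then y i * (H i - w i) else 0) := by
      intro i
      rw [hB]
      by_cases h : i = j <;> simp [h] <;> ring
    rw [Finset.sum_congr rfl fun i _ => h i, Finset.sum_add_distrib,
      Finset.sum_ite_eq' Finset.univ j]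
    simp
  have hsol : ∀ j, ∑ i, x i * B i j = 1 := by
    intro j
    rw [key]
    have hx' : ∀ i, x i * w i = (w i / (H i - w i)) / (1 + T) := by
      intro i
      rw [hx]
      field_simp
    have hxj : x j * (H j - w j) = 1 / (1 + T) := by
      rw [hx]
      field_simp
      exact div_self (hd j).ne'
    rw [hxj, Finset.sum_congr rfl fun i _ => hx' i, ← Finset.sum_div, ← hT,
      ← add_div]
    rw [div_eq_one_iff_eq hSpos.ne']
    ring
  refine ⟨hsol, fun y hy => ?_⟩
  set c := ∑ i, (y i - x i) * w i with hc
  have hz : ∀ j, y j - x j = -c / (H j - w j) := by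
    intro j
    have e1 := (key y j) ▸ hy j
    have e2 := (key x j) ▸ hsol j
    have hsum : c = (∑ i, y i * w i) - ∑ i, x i * w i := by
      rw [hc, ← Finset.sum_sub_distrib]
      exact Finset.sum_congr rfl fun i _ => by ring
    have h0 : c + (y j - x j) * (H j - w j) = 0 := by
      rw [hsum]; nlinarith [e1, e2]
    rw [eq_div_iff (hd j).ne']
    linarith
  have hcT : c = -c * T := by
    calc c = ∑ i, (y i - x i) * w i := hc
    _ = ∑ i, (-c / (H i - w i)) * w i := Finset.sum_congr rfl fun i _ => by rw [hz i]
    _ = -c * T := by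
        rw [hT, Finset.mul_sum]
        exact Finset.sum_congr rfl fun i _ => by ring
  have hc0 : c = 0 := by
    have h1 : c * (1 + T) = 0 := by linarith [hcT]
    exact (mul_eq_zero.mp h1).resolve_right hSpos.ne'
  funext j
  have := hz j
  rw [hc0] at this
  simp at this
  linarith [this]
end

section
/- Under the assumptions H_i > w_i > 0 for all i, the matrix B with b_{ii} = H_i and b_{ij} = w_i (j ≠ i) is invertible. -/
/-- Under H_i > w_i > 0, the matrix with diagonal H_i and off-diagonal row entries w_i
is invertible. -/
theorem matrix_B_isUnit (N : ℕ) (H w : Fin N → ℝ)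
    (hw : ∀ i, 0 < w i) (hH : ∀ i, w i < H i)
    (B : Matrix (Fin N) (Fin N) ℝ)
    (hB : ∀ i j, B i j = if i = j then H i else w i) :
    IsUnit B := by
  rw [Matrix.isUnit_iff_isUnit_det, isUnit_iff_ne_zero]
  intro hdet
  obtain ⟨v, hv, hmv⟩ := (Matrix.exists_mulVec_eq_zero_iff).mpr hdet
  set S := ∑ j, v j with hS
  have key : ∀ i, (H i - w i) * v i = -(w i * S) := by
    intro i
    have h0 : B.mulVec v i = 0 := by rw [hmv]; rfl
    have : ∑ j, B i j * v j = 0 := h0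
    have hsum : ∑ j, B i j * v j
        = w i * S + (H i - w i) * v i := by
      have : ∀ j, B i j * v j
          = w i * v j + (if j = i then (H i - w i) * v i else 0) := by
        intro j
        rw [hB]
        by_cases h : i = j
        · subst h; simp; ring
        · have h' : ¬ j = i := fun hji => h hji.symm
          simp [h, h']
      rw [Finset.sum_congr rfl fun j _ => this j, Finset.sum_add_distrib,
        Finset.sum_ite_eq' Finset.univ i (fun _ => (H i - w i) * v i)]
      simp [hS, Finset.mul_sum]
    rw [hsum] at this
    linarith
  have hpos : ∀ i, 0 < H i - w i := fun i => by linarith [hH i]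
  have hneg : ∀ i, v i * S ≤ 0 := by
    intro i
    have h1 : (H i - w i) * (v i * S) = -(w i * S * S) := by
      rw [← mul_assoc, key i]; ring
    nlinarith [mul_self_nonneg S, hw i, hpos i]
  have hS0 : S = 0 := by
    have h2 : S * S ≤ 0 := by
      have : S * S = ∑ i, v i * S := by rw [hS, Finset.sum_mul]
      rw [this]
      exact Finset.sum_nonpos fun i _ => hneg i
    nlinarith [mul_self_nonneg S]
  apply hv
  funext i
  have := key i
  rw [hS0] at this
  have : v i = 0 := by
    have := hpos i
    nlinarith [key i, hS0]
  simpa using this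
end

section
/- With B as above, every entry of the row vector 1 B^{-1} is strictly positive; explicitly, (1 B^{-1})_i = 1/((H_i - w_i)(1 + Σ_{k=1}^N w_k/(H_k - w_k))) > 0. -/
open Finset

/-- Every entry of the row vector 1 B⁻¹ is given by the explicit formula
1/((H_i - w_i)(1 + Σ_k w_k/(H_k - w_k))) and is strictly positive. -/
theorem one_vecMul_inv_pos (N : ℕ) (H w : Fin N → ℝ)
    (hw : ∀ i, 0 < w i) (hH : ∀ i, w i < H i)
    (B : Matrix (Fin N) (Fin N) ℝ)
    (hB : ∀ i j, B i j = if i = j then H i else w i) :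
    ∀ i, Matrix.vecMul (fun _ => (1 : ℝ)) B⁻¹ i
          = 1 / ((H i - w i) * (1 + ∑ k, w k / (H k - w k))) ∧
        0 < Matrix.vecMul (fun _ => (1 : ℝ)) B⁻¹ i := by
  obtain ⟨d, hdc⟩ : ∃ d : Fin N → ℝ, d = fun i => H i - w i := ⟨_, rfl⟩
  have hd : ∀ i, 0 < d i := fun i => by rw [hdc]; exact sub_pos.2 (hH i)
  have hdne : ∀ i, d i ≠ 0 := fun i => (hd i).ne'
  obtain ⟨S, hSdef⟩ : ∃ S : ℝ, S = ∑ k, w k / d k := ⟨_, rfl⟩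
  have hS0 : 0 ≤ S := hSdef ▸ Finset.sum_nonneg fun k _ => div_nonneg (hw k).le (hd k).le
  have hSpos : 0 < 1 + S := by linarith
  have hSne : (1 + S) ≠ 0 := hSpos.ne'
  obtain ⟨A, hAdef⟩ : ∃ A : Matrix (Fin N) (Fin N) ℝ,
      A = fun i j => (if i = j then 1 / d i else 0) - w i / (d i * d j * (1 + S)) := ⟨_, rfl⟩
  have hBrw : ∀ k j, B k j = w k + (if k = j then d k else 0) := by
    intro k j
    rw [hB, hdc]
    split <;> simp
  have key : A * B = 1 := by
    ext i j
    rw [Matrix.mul_apply, Matrix.one_apply]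
    have hsplit : ∑ k, A i k * B k j
        = (∑ k, (if i = k then 1 / d i else 0) * w k)
        + (∑ k, (if i = k then 1 / d i else 0) * (if k = j then d k else 0))
        - (∑ k, w i / (d i * (1 + S)) * (w k / d k))
        - (∑ k, w i / (d i * d k * (1 + S)) * (if k = j then d k else 0)) := by
      rw [← Finset.sum_add_distrib, ← Finset.sum_sub_distrib, ← Finset.sum_sub_distrib]
      refine Finset.sum_congr rfl fun k _ => ?_
      rw [hBrw k j, hAdef]
      have h1 : w i / (d i * (1 + S)) * (w k / d k)
          = w i / (d i * d k * (1 + S)) * w k := by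
        rw [div_mul_div_comm, div_mul_eq_mul_div]
        congr 1
        ring
      rw [h1]
      ring
    rw [hsplit]
    have e1 : (∑ k, (if i = k then 1 / d i else 0) * w k) = 1 / d i * w i := by
      simp [Finset.sum_ite_eq]
    have e2 : (∑ k, (if i = k then 1 / d i else 0) * (if k = j then d k else 0))
        = if i = j then 1 else 0 := by
      rw [Finset.sum_eq_single i]
      · by_cases h : i = j <;> simp [h, hdne]
      · intro b _ hb; simp [Ne.symm hb]
      · simp
    have e3 : (∑ k, w i / (d i * (1 + S)) * (w k / d k)) = w i / (d i * (1 + S)) * S := by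
      rw [← Finset.mul_sum, hSdef]
    have e4 : (∑ k, w i / (d i * d k * (1 + S)) * (if k = j then d k else 0))
        = w i / (d i * (1 + S)) := by
      rw [Finset.sum_eq_single j]
      · rw [if_pos rfl, div_mul_eq_mul_div, mul_comm (w i) (d j),
          mul_comm (d i) (d j), mul_assoc, mul_div_mul_left _ _ (hdne j)]
      · intro b _ hb; simp [hb]
      · simp
    rw [e1, e2, e3, e4]
    have comb : ∀ dd ww : ℝ, dd ≠ 0 →
        1 / dd * ww - ww / (dd * (1 + S)) * S - ww / (dd * (1 + S)) = 0 := by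
      intro dd ww h
      field_simp
      ring
    by_cases h : i = j
    · rw [if_pos h]
      linarith [comb (d i) (w i) (hdne i)]
    · rw [if_neg h]
      linarith [comb (d i) (w i) (hdne i)]
  have hInv : B⁻¹ = A := Matrix.inv_eq_left_inv key
  intro i
  have hval : Matrix.vecMul (fun _ => (1 : ℝ)) B⁻¹ i = 1 / (d i * (1 + S)) := by
    rw [hInv]
    simp only [Matrix.vecMul, dotProduct, one_mul, hAdef]
    rw [Finset.sum_sub_distrib]
    have e1 : (∑ j, if j = i then 1 / d j else 0) = 1 / d i := by
      simp [Finset.sum_ite_eq']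
    have e2 : (∑ j : Fin N, w j / (d j * d i * (1 + S))) = S / (d i * (1 + S)) := by
      rw [hSdef, Finset.sum_div]
      refine Finset.sum_congr rfl fun j _ => ?_
      rw [div_div, mul_assoc]
    rw [e1, e2]
    have : ∀ dd : ℝ, dd ≠ 0 → 1 / dd - S / (dd * (1 + S)) = 1 / (dd * (1 + S)) := by
      intro dd h
      field_simp
      ring
    exact this (d i) (hdne i)
  have hdi : d i = H i - w i := by rw [hdc]
  have hSi : S = ∑ k, w k / (H k - w k) := by rw [hSdef]; simp [hdc]
  refine ⟨?_, ?_⟩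
  · rw [hval, hdi, hSi]
  · rw [hval]
    exact div_pos one_pos (mul_pos (hd i) hSpos)
end

section
/- Let M = Σ_{i=1}^N w_i x_i where x solves x B = 1 with B as above. Then M = (Σ_{i=1}^N w_i/(H_i - w_i)) / (1 + Σ_{i=1}^N w_i/(H_i - w_i)), and in particular M < 1. -/
open Finset

/-- For the solution x of x B = 1, the quantity M = Σ w_i x_i equals
S/(1+S) with S = Σ w_i/(H_i - w_i); in particular M < 1. -/
theorem M_formula_lt_one (N : ℕ) (H w : Fin N → ℝ)
    (hw : ∀ i, 0 < w i) (hH : ∀ i, w i < H i)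
    (B : Matrix (Fin N) (Fin N) ℝ)
    (hB : ∀ i j, B i j = if i = j then H i else w i)
    (x : Fin N → ℝ) (hx : ∀ j, ∑ i, x i * B i j = 1)
    (M : ℝ) (hM : M = ∑ i, w i * x i) :
    M = (∑ i, w i / (H i - w i)) / (1 + ∑ i, w i / (H i - w i)) ∧ M < 1 := by
  set S : ℝ := ∑ i, w i / (H i - w i) with hS
  have hpos : ∀ i, 0 < H i - w i := fun i => sub_pos.mpr (hH i)
  have hSnn : 0 ≤ S := Finset.sum_nonneg fun i _ =>
    div_nonneg (hw i).le (hpos i).le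
  have key : ∀ j, x j * (H j - w j) = 1 - M := by
    intro j
    have h1 : ∑ i, x i * B i j = ∑ i, (w i * x i + (if i = j then x i * (H i - w i) else 0)) := by
      apply Finset.sum_congr rfl
      intro i _
      rw [hB]
      by_cases h : i = j <;> simp [h] <;> ring
    rw [Finset.sum_add_distrib, Finset.sum_ite_eq' Finset.univ j, ← hM] at h1
    simp only [Finset.mem_univ, if_true] at h1
    have := hx j
    rw [h1] at this
    linarith
  have hMS : M = (1 - M) * S := by
    rw [hM, hS, Finset.mul_sum]
    apply Finset.sum_congr rfl
    intro j _
    have hne : H j - w j ≠ 0 := (hpos j).ne'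
    have hxj : x j = (1 - M) / (H j - w j) := by
      field_simp
      linarith [key j]
    rw [hxj]
    field_simp
    rw [← hM]
  have h1S : (0:ℝ) < 1 + S := by linarith
  constructor
  · rw [eq_div_iff h1S.ne']
    ring_nf
    ring_nf at hMS
    linarith
  · have : M * (1 + S) = S := by ring_nf; ring_nf at hMS; linarith
    nlinarith
end

section
/- In the fluid model of the perfect integrate-and-fire network: if at a regular point t₀ the coordinates in S are zero and the fluid spike-rate derivatives satisfy equations (φ^Z_i)'(t₀) = -ν + H_i(φ^η_i)'(t₀) + Σ_{j≠i} w_j(φ^η_j)'(t₀) with (φ^Z_i)'(t₀)=0 for i ∈ S and (φ^η_j)'(t₀)=0 for j ∉ S, then for every i ∉ S one has (φ^Z_i)'(t₀) = -ν/(1 + Σ_{k∈S} w_k/(H_k - w_k)) < 0. -/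
open Finset

/-- Fluid model: the derivative of each fluid potential coordinate not in the
zero set S equals -ν/(1 + Σ_{k∈S} w_k/(H_k - w_k)) and is strictly negative. -/
theorem fluid_derivative_off_zero_set (N : ℕ) (ν : ℝ) (hν : 0 < ν)
    (H w : Fin N → ℝ) (hw : ∀ i, 0 < w i) (hH : ∀ i, w i < H i)
    (S : Finset (Fin N)) (d φ' : Fin N → ℝ)
    (hdS : ∀ i ∈ S, 0 = -ν + (H i - w i) * d i + ∑ j ∈ S, w j * d j)
    (hd0 : ∀ j ∉ S, d j = 0)
    (hφ : ∀ i ∉ S, φ' i = -ν + ∑ j ∈ S, w j * d j) :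
    ∀ i ∉ S, φ' i = -ν / (1 + ∑ k ∈ S, w k / (H k - w k)) ∧ φ' i < 0 := by
  intro i hi
  set T := ∑ j ∈ S, w j * d j with hT
  set C := ∑ k ∈ S, w k / (H k - w k) with hC
  have hCpos : 0 ≤ C := Finset.sum_nonneg fun k _ =>
    div_nonneg (le_of_lt (hw k)) (by linarith [hH k])
  have h1C : (0:ℝ) < 1 + C := by linarith
  have hdval : ∀ j ∈ S, d j = (ν - T) / (H j - w j) := by
    intro j hj
    have h := hdS j hj
    have hne : H j - w j ≠ 0 := by have := hH j; linarith
    rw [eq_div_iff hne]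
    linarith
  have hTeq : T = (ν - T) * C := by
    rw [hT, hC, Finset.mul_sum]
    apply Finset.sum_congr rfl
    intro j hj
    rw [hdval j hj]
    have hne : H j - w j ≠ 0 := by have := hH j; linarith
    field_simp
    ring
  have hTval : T * (1 + C) = ν * C := by nlinarith [hTeq]
  have hφi := hφ i hi
  have hmain : φ' i = -ν / (1 + C) := by
    rw [hφi, eq_div_iff (ne_of_gt h1C)]
    nlinarith [hTval]
  refine ⟨hmain, ?_⟩
  rw [hmain]
  exact div_neg_of_neg_of_pos (by linarith) h1C
end
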